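/- Let k be a commutative ring, g a Lie algebra over k, R a commutative k-algebra, and R' a commutative R-algebra that is faithfully flat and formally étale over R. Let R'' = R' ⊗_R R' with canonical maps p₁, p₂ : R' → R'', and set R''₀ = {s ∈ R'' : d''(s) = 0 for every k-derivation d of R}, where for d ∈ Der_k(R), d' denotes its unique extension to R' and d'' the unique k-derivation of R'' with d'' ∘ pᵢ = pᵢ ∘ d' (i = 1,2). Let u be an automorphism of the Lie algebra g ⊗_k R'' over R'' such that both u and u⁻¹ map g ⊗ 1 into the image of g ⊗_k R''₀ in g ⊗_k R''. Define L_u = {x ∈ g ⊗_k R' : u((id_g ⊗ p₁)(x)) = (id_g ⊗ p₂)(x)}, a Lie algebra over R. Assume moreover that every k-linear endomorphism χ of L_u satisfying χ([x,y]) = [χ(x),y] = [x,χ(y)] is of the form x ↦ r • x for a unique r ∈ R. Then: (1) for each d ∈ Der_k(R), the restriction ρ(d) of id_g ⊗ d' to L_u is a k-linear Lie derivation of L_u, and ρ : Der_k(R) → Der_k(L_u) is an injective Lie algebra homomorphism satisfying ρ(d)(r • x) = d(r) • x + r • ρ(d)(x) for all r ∈ R, x ∈ L_u; (2) every k-linear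 Lie derivation δ of L_u decomposes uniquely as δ = δ₀ + ρ(d) with δ₀ an R-linear derivation of L_u and d ∈ Der_k(R); and (3) the R-linear derivations form a Lie ideal of Der_k(L_u), so Der_k(L_u) = Der_R(L_u) ⋊ ρ(Der_k(R)). -/

import Mathlib

/-!
For `d ∈ Der_k(R)`, the derivation `id_g ⊗ d''` of `R'' ⊗ g` commutes with `u`, since `u` is
`R''`-linear and sends `1 ⊗ g` into elements killed by `id_g ⊗ d''`. As `pᵢ ∘ d' = d'' ∘ pᵢ`,
the derivation `id_g ⊗ d'` therefore preserves the descent locus `L_u` and restricts to `ρ(d)`.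
Conversely, for a derivation `δ` of `L_u` and `r ∈ R`, the map `x ↦ δ(r x) - r δ(x)` lies in the
centroid of `L_u`, hence is multiplication by a unique scalar `d(r)`; uniqueness makes `d` a
derivation of `R`, and `δ - ρ(d)` is then `R`-linear.
-/

open TensorProduct

set_option maxSynthPendingDepth 3

namespace Derivation

section FormallyUnramified

variable {k A B M : Type*} [CommRing k] [CommRing A] [CommRing B] [Algebra k B]
  [Algebra A B] [AddCommGroup M] [Module B M] [Module k M] [Module A M] [IsScalarTower A B M]

def ofMapAlgebraMapEqZero (E : Derivation k B M) (h : ∀ a, E (algebraMap A B a) = 0) :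
    Derivation A B M where
  toFun := E
  map_add' := E.map_add
  map_smul' a b := by
    rw [Algebra.smul_def, E.leibniz, h, smul_zero, add_zero, algebraMap_smul]
    rfl
  map_one_eq_zero' := E.map_one_eq_zero
  leibniz' := E.leibniz

theorem ext_of_formallyUnramified [Algebra.FormallyUnramified A B] {E F : Derivation k B M}
    (h : ∀ a, E (algebraMap A B a) = F (algebraMap A B a)) : E = F := by
  have : Subsingleton (Derivation A B M) :=
    (KaehlerDifferential.linearMapEquivDerivation A B).symm.injective.subsingleton
  have hEF : (E - F).ofMapAlgebraMapEqZero (A := A) (fun a => sub_eq_zero.mpr (h a)) = 0 :=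
    Subsingleton.elim _ _
  ext x
  exact sub_eq_zero.mp (congr($hEF x))

variable [Algebra k A] [IsScalarTower k A B] [Algebra.FormallyUnramified A B]

/-- Extensions of derivations along a formally unramified map are unique, hence additive and
bracket-preserving. -/
def extensionLieHom (D' : Derivation k A A → Derivation k B B)
    (hD' : ∀ d a, D' d (algebraMap A B a) = algebraMap A B (d a)) :
    Derivation k A A →ₗ⁅k⁆ Derivation k B B where
  toFun := D'
  map_add' d e := ext_of_formallyUnramified (A := A) fun a => by simp [hD']
  map_smul' c d := ext_of_formallyUnramified (A := A) fun a => by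
    simp [hD', algebraMap.coe_smul]
  map_lie' {d e} := ext_of_formallyUnramified (A := A) fun a => by
    simp [commutator_apply, hD']

end FormallyUnramified

section BaseChange

variable {k A g : Type*} [CommRing k] [CommRing A] [Algebra k A]

theorem rTensor_smul [AddCommGroup g] [Module k g] (E : Derivation k A A) (s : A)
    (w : A ⊗[k] g) :
    LinearMap.rTensor g E.toLinearMap (s • w) =
      E s • w + s • LinearMap.rTensor g E.toLinearMap w := by
  induction w using TensorProduct.induction_on with
  | zero => simp
  | tmul t x =>
    simp only [smul_tmul', LinearMap.rTensor_tmul, ← add_tmul, smul_eq_mul, coeFn_coe,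
      leibniz]
    congr 1
    ring
  | add a b ha hb => simp only [smul_add, map_add, ha, hb]; abel

theorem apply_rTensor_eq_rTensor_apply {M N : Type*} [AddCommGroup M] [Module k M]
    [AddCommGroup N] [Module k N] (u : A ⊗[k] M →ₗ[A] A ⊗[k] N) (E : Derivation k A A)
    (hu : ∀ x, LinearMap.rTensor N E.toLinearMap (u (1 ⊗ₜ x)) = 0) (w : A ⊗[k] M) :
    u (LinearMap.rTensor M E.toLinearMap w) = LinearMap.rTensor N E.toLinearMap (u w) := by
  induction w using TensorProduct.induction_on with
  | zero => simp
  | tmul s x =>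
    have hsx : s ⊗ₜ[k] x = s • (1 : A) ⊗ₜ[k] x := by rw [smul_tmul', smul_eq_mul, mul_one]
    have h1 : LinearMap.rTensor M E.toLinearMap ((1 : A) ⊗ₜ[k] x) = 0 := by simp
    rw [hsx, E.rTensor_smul, h1, smul_zero, add_zero, u.map_smul, u.map_smul, E.rTensor_smul, hu,
      smul_zero, add_zero]
  | add a b ha hb => simp only [map_add, ha, hb]

variable [LieRing g] [LieAlgebra k g]

theorem rTensor_lie (E : Derivation k A A) (a b : A ⊗[k] g) :
    LinearMap.rTensor g E.toLinearMap ⁅a, b⁆ =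
      ⁅LinearMap.rTensor g E.toLinearMap a, b⁆ + ⁅a, LinearMap.rTensor g E.toLinearMap b⁆ := by
  induction a using TensorProduct.induction_on with
  | zero => simp
  | add a a' ha ha' => simp only [add_lie, map_add, ha, ha']; abel
  | tmul s x =>
    induction b using TensorProduct.induction_on with
    | zero => simp
    | add b b' hb hb' => simp only [lie_add, map_add, hb, hb']; abel
    | tmul t y =>
      simp only [LieAlgebra.ExtendScalars.bracket_tmul, LinearMap.rTensor_tmul, ← add_tmul,
        coeFn_coe, leibniz, smul_eq_mul]
      congr 1
      ring

variable (g) in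
def baseChangeLieHom : Derivation k A A →ₗ⁅k⁆ LieDerivation k (A ⊗[k] g) (A ⊗[k] g) where
  toFun E :=
    { toLinearMap := LinearMap.rTensor g E.toLinearMap
      leibniz' a b := by rw [rTensor_lie, ← lie_skew b]; abel }
  map_add' E F := by ext w; simp [LinearMap.rTensor_add]
  map_smul' c E := by ext w; simp [LinearMap.rTensor_smul]
  map_lie' {E F} := by
    ext w
    simp [commutator_coe_linear_map, LieRing.of_associative_ring_bracket, LinearMap.rTensor_sub,
      LinearMap.rTensor_mul]

end BaseChange

end Derivation

section TensorCommute

variable {k A B M : Type*} [CommRing k] [AddCommGroup A] [Module k A] [AddCommGroup B]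
  [Module k B] [AddCommGroup M] [Module k M]

theorem LinearMap.apply_rTensor_eq_rTensor_apply_of_tmul (p : A ⊗[k] M →ₗ[k] B ⊗[k] M) (f : A → B)
    (hp : ∀ s x, p (s ⊗ₜ x) = f s ⊗ₜ x) {E : A →ₗ[k] A} {F : B →ₗ[k] B}
    (hEF : ∀ s, F (f s) = f (E s)) (y : A ⊗[k] M) :
    p (LinearMap.rTensor M E y) = LinearMap.rTensor M F (p y) := by
  induction y using TensorProduct.induction_on with
  | zero => simp
  | tmul s x => simp only [LinearMap.rTensor_tmul, hp, ← hEF]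
  | add a b ha hb => simp only [map_add, ha, hb]

theorem LinearMap.rTensor_eq_zero_of_mem_span (E : A →ₗ[k] B) {P : A → Prop} (hP : ∀ s, P s → E s = 0) {w : A ⊗[k] M}
    (hw : w ∈ Submodule.span k {y | ∃ s x, P s ∧ y = s ⊗ₜ[k] x}) :
    LinearMap.rTensor M E w = 0 := by
  refine LinearMap.mem_ker.mp (Submodule.span_le.mpr ?_ hw)
  rintro _ ⟨s, x, hs, rfl⟩
  simp [hP s hs]

end TensorCommute

namespace LieDerivation

variable {k D L M : Type*} [CommRing k] [LieRing L] [LieAlgebra k L] [LieRing M] [LieAlgebra k M]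
  (ι : L →ₗ⁅k⁆ M) (hι : Function.Injective ι)

noncomputable def restrict (δ : LieDerivation k M M) (hδ : ∀ x, ∃ y, ι y = δ (ι x)) :
    LieDerivation k L L where
  toFun x := (hδ x).choose
  map_add' x y := hι (by rw [(hδ _).choose_spec]; simp [(hδ _).choose_spec])
  map_smul' c x := hι (by rw [(hδ _).choose_spec]; simp [(hδ _).choose_spec])
  leibniz' x y := hι <| by
    change ι (hδ _).choose = ι (⁅x, (hδ y).choose⁆ - ⁅y, (hδ x).choose⁆)
    rw [(hδ _).choose_spec]
    simp only [(hδ _).choose_spec, map_sub, LieHom.map_lie, apply_lie_eq_sub]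

@[simp]
theorem apply_restrict (δ : LieDerivation k M M) (hδ : ∀ x, ∃ y, ι y = δ (ι x)) (x : L) :
    ι (restrict ι hι δ hδ x) = δ (ι x) :=
  (hδ x).choose_spec

variable [LieRing D] [LieAlgebra k D]

noncomputable def restrictLieHom (Φ : D →ₗ⁅k⁆ LieDerivation k M M)
    (hΦ : ∀ d x, ∃ y, ι y = Φ d (ι x)) : D →ₗ⁅k⁆ LieDerivation k L L where
  toFun d := restrict ι hι (Φ d) (hΦ d)
  map_add' d e := ext fun x => hι (by simp)
  map_smul' c d := ext fun x => hι (by simp)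
  map_lie' {d e} := ext fun x => hι (by simp)

theorem apply_restrictLieHom (Φ : D →ₗ⁅k⁆ LieDerivation k M M)
    (hΦ : ∀ d x, ∃ y, ι y = Φ d (ι x)) (d : D) (x : L) :
    ι (restrictLieHom ι hι Φ hΦ d x) = Φ d (ι x) :=
  apply_restrict ι hι _ _ x

end LieDerivation

section Centroid

variable (k R L : Type*) [CommRing k] [CommRing R] [LieRing L] [LieAlgebra k L] [LieAlgebra R L]

/-- The canonical map from `R` to the centroid of the Lie `k`-algebra `L` is bijective. -/
def CentroidIsScalars : Prop :=
  ∀ χ : L →ₗ[k] L, (∀ x y : L, χ ⁅x, y⁆ = ⁅χ x, y⁆ ∧ χ ⁅x, y⁆ = ⁅x, χ y⁆) →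
    ∃! r : R, ∀ x : L, χ x = r • x

variable {k R L} [Algebra k R] [IsScalarTower k R L]

theorem CentroidIsScalars.eq_of_smul_eq (hL : CentroidIsScalars k R L) {a b : R}
    (hab : ∀ x : L, a • x = b • x) : a = b :=
  (hL (a • LinearMap.id) fun x y => by simp).unique (fun x => rfl) hab

def LieDerivation.smulDefect (δ : LieDerivation k L L) (r : R) : L →ₗ[k] L :=
  (δ : L →ₗ[k] L) ∘ₗ (r • LinearMap.id) - r • (δ : L →ₗ[k] L)

theorem LieDerivation.smulDefect_apply (δ : LieDerivation k L L) (r : R) (x : L) :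
    δ.smulDefect r x = δ (r • x) - r • δ x :=
  rfl

theorem LieDerivation.smulDefect_lie (δ : LieDerivation k L L) (r : R) (x y : L) :
    δ.smulDefect r ⁅x, y⁆ = ⁅δ.smulDefect r x, y⁆ := by
  simp only [smulDefect_apply, ← smul_lie, apply_lie_eq_add, smul_add, sub_lie]
  abel

theorem LieDerivation.lie_smulDefect (δ : LieDerivation k L L) (r : R) (x y : L) :
    δ.smulDefect r ⁅x, y⁆ = ⁅x, δ.smulDefect r y⁆ := by
  rw [← lie_skew, map_neg, smulDefect_lie, ← lie_skew, neg_neg]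

theorem CentroidIsScalars.exists_derivation (hL : CentroidIsScalars k R L)
    (δ : LieDerivation k L L) :
    ∃ d : Derivation k R R, ∀ (r : R) (x : L), δ (r • x) = d r • x + r • δ x := by
  have hc : ∀ r : R, ∃ c : R, ∀ x : L, δ (r • x) = c • x + r • δ x := fun r => by
    obtain ⟨c, hc⟩ :=
      (hL (δ.smulDefect r) fun x y => ⟨δ.smulDefect_lie r x y, δ.lie_smulDefect r x y⟩).exists
    exact ⟨c, fun x => by rw [← hc, δ.smulDefect_apply, sub_add_cancel]⟩
  choose c hc using hc
  refine ⟨{ toFun := c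
            map_add' a b := hL.eq_of_smul_eq fun x => ?_
            map_smul' m a := hL.eq_of_smul_eq fun x => ?_
            map_one_eq_zero' := hL.eq_of_smul_eq fun x => ?_
            leibniz' a b := hL.eq_of_smul_eq fun x => ?_ }, fun r x => ?_⟩
  · have := hc (a + b) x
    rw [add_smul, map_add, hc, hc, add_smul] at this
    linear_combination (norm := module) -this
  · have := hc (m • a) x
    rw [smul_assoc, map_smul, hc, smul_assoc, smul_add] at this
    rw [RingHom.id_apply, smul_assoc]
    exact (add_right_cancel this).symm
  · have := hc 1 x
    rw [one_smul, one_smul] at this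
    linear_combination (norm := module) -this
  · have := hc (a * b) x
    rw [mul_smul, hc, hc, mul_smul] at this
    linear_combination (norm := module) -this
  · exact hc r x

theorem CentroidIsScalars.lie_apply_smul (hL : CentroidIsScalars k R L)
    (δ δ₀ : LieDerivation k L L) (h₀ : ∀ (r : R) (x : L), δ₀ (r • x) = r • δ₀ x) (r : R)
    (x : L) : ⁅δ, δ₀⁆ (r • x) = r • ⁅δ, δ₀⁆ x := by
  obtain ⟨d, hd⟩ := hL.exists_derivation δ
  simp only [LieDerivation.commutator_apply, h₀, hd, map_add, smul_sub]
  abel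

variable {ρ : Derivation k R R → LieDerivation k L L}
  (hρ : ∀ (d : Derivation k R R) (r : R) (x : L), ρ d (r • x) = d r • x + r • ρ d x)
include hρ

theorem CentroidIsScalars.injective_of_leibniz (hL : CentroidIsScalars k R L) :
    Function.Injective ρ := by
  intro d e hde
  ext r
  refine hL.eq_of_smul_eq fun x => ?_
  have := hρ d r x
  rw [hde, hρ e r x] at this
  exact (add_right_cancel this).symm

theorem CentroidIsScalars.existsUnique_add_of_leibniz (hL : CentroidIsScalars k R L)
    (δ : LieDerivation k L L) :
    ∃! p : LieDerivation k L L × Derivation k R R,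
      (∀ (r : R) (x : L), p.1 (r • x) = r • p.1 x) ∧ δ = p.1 + ρ p.2 := by
  obtain ⟨d, hd⟩ := hL.exists_derivation δ
  refine ⟨(δ - ρ d, d), ⟨fun r x => ?_, (sub_add_cancel δ (ρ d)).symm⟩, ?_⟩
  · simp only [LieDerivation.sub_apply, hd, hρ, smul_sub]
    abel
  rintro ⟨δ₀, e⟩ ⟨h₀, rfl⟩
  have hed : e = d := by
    ext r
    refine hL.eq_of_smul_eq fun x => ?_
    have := hd r x
    simp only [LieDerivation.add_apply, h₀, hρ, smul_add] at this
    linear_combination (norm := module) this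
  subst hed
  rw [add_sub_cancel_right]

end Centroid

theorem derivations_of_etale_descent_form.{u'}
    (k : Type*) [CommRing k] (g : Type*) [LieRing g] [LieAlgebra k g]
    (R : Type u') [CommRing R] [Algebra k R]
    (R' : Type u') [CommRing R'] [Algebra R R'] [Algebra k R'] [IsScalarTower k R R']
    [Algebra.FormallyEtale R R'] [Module.FaithfullyFlat R R']
    -- the unique extensions of `k`-derivations of `R` to `R'` and to `R'' = R' ⊗[R] R'`
    (D' : Derivation k R R → Derivation k R' R')
    (hD' : ∀ (d : Derivation k R R) (r : R),
      D' d (algebraMap R R' r) = algebraMap R R' (d r))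
    (D'' : Derivation k R R → Derivation k (R' ⊗[R] R') (R' ⊗[R] R'))
    (hD''₁ : ∀ (d : Derivation k R R) (s : R'),
      D'' d (s ⊗ₜ[R] (1 : R')) = (D' d s) ⊗ₜ[R] (1 : R'))
    (hD''₂ : ∀ (d : Derivation k R R) (s : R'),
      D'' d ((1 : R') ⊗ₜ[R] s) = (1 : R') ⊗ₜ[R] (D' d s))
    -- the two maps `pᵢᵍ = pᵢ ⊗ id_g : g ⊗ R' → g ⊗ R''`
    (p₁g p₂g : (R' ⊗[k] g) →ₗ[k] ((R' ⊗[R] R') ⊗[k] g))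
    (hp₁ : ∀ (s : R') (x : g), p₁g (s ⊗ₜ[k] x) = (s ⊗ₜ[R] (1 : R')) ⊗ₜ[k] x)
    (hp₂ : ∀ (s : R') (x : g), p₂g (s ⊗ₜ[k] x) = ((1 : R') ⊗ₜ[R] s) ⊗ₜ[k] x)
    -- the descent cocycle: an automorphism of the Lie algebra `R'' ⊗ g` over `R''`
    (u : ((R' ⊗[R] R') ⊗[k] g) ≃ₗ⁅R' ⊗[R] R'⁆ ((R' ⊗[R] R') ⊗[k] g))
    (hu : ∀ x : g, u ((1 : R' ⊗[R] R') ⊗ₜ[k] x) ∈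
      Submodule.span k {y : (R' ⊗[R] R') ⊗[k] g |
        ∃ (s : R' ⊗[R] R') (x' : g), (∀ d : Derivation k R R, D'' d s = 0) ∧ y = s ⊗ₜ[k] x'})
    (hu' : ∀ x : g, u.symm ((1 : R' ⊗[R] R') ⊗ₜ[k] x) ∈
      Submodule.span k {y : (R' ⊗[R] R') ⊗[k] g |
        ∃ (s : R' ⊗[R] R') (x' : g), (∀ d : Derivation k R R, D'' d s = 0) ∧ y = s ⊗ₜ[k] x'})
    -- the twisted form `L_u`, presented as a Lie algebra `Lu` over `R` (and over `k`)
    -- identified by `ι` with the descent locus `{x : R' ⊗[k] g | u (p₁ᵍ x) = p₂ᵍ x}`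
    (Lu : Type*) [LieRing Lu] [LieAlgebra k Lu] [LieAlgebra R Lu] [IsScalarTower k R Lu]
    (ι : Lu →ₗ[k] (R' ⊗[k] g))
    (hι_inj : Function.Injective ι)
    (hι_lie : ∀ x y : Lu, ι ⁅x, y⁆ = ⁅ι x, ι y⁆)
    (hι_smul : ∀ (r : R) (x : Lu), ι (r • x) = algebraMap R R' r • ι x)
    (hι_range : ∀ y : R' ⊗[k] g, (∃ x : Lu, ι x = y) ↔ u (p₁g y) = p₂g y)
    -- assumption (i): the canonical map `R → Ctd_k(L_u)` is an isomorphism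
    (hcent : ∀ χ : Lu →ₗ[k] Lu,
      (∀ x y : Lu, χ ⁅x, y⁆ = ⁅χ x, y⁆ ∧ χ ⁅x, y⁆ = ⁅x, χ y⁆) →
      ∃! r : R, ∀ x : Lu, χ x = r • x) :
    ∃ ρ : Derivation k R R →ₗ⁅k⁆ LieDerivation k Lu Lu,
      -- (1) `ρ d` is the restriction of `id_g ⊗ D' d` to `L_u`, it is `k`-linear, and
      -- `ρ` is an injective Lie algebra homomorphism satisfying the Leibniz rule
      (∀ (d : Derivation k R R) (x : Lu),
        ι (ρ d x) = LinearMap.rTensor g (D' d).toLinearMap (ι x)) ∧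
      Function.Injective ρ ∧
      (∀ (d : Derivation k R R) (r : R) (x : Lu),
        ρ d (r • x) = d r • x + r • ρ d x) ∧
      -- (2) unique decomposition `δ = δ₀ + ρ d` with `δ₀` an `R`-linear derivation
      (∀ δ : LieDerivation k Lu Lu,
        ∃! p : LieDerivation k Lu Lu × Derivation k R R,
          (∀ (r : R) (x : Lu), p.1 (r • x) = r • p.1 x) ∧ δ = p.1 + ρ p.2) ∧
      -- (3) the `R`-linear derivations form a Lie ideal of `Der_k(L_u)`
      (∀ δ δ₀ : LieDerivation k Lu Lu,
        (∀ (r : R) (x : Lu), δ₀ (r • x) = r • δ₀ x) →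
        ∀ (r : R) (x : Lu), ⁅δ, δ₀⁆ (r • x) = r • ⁅δ, δ₀⁆ x) := by

  have hcomm : ∀ d w, u (LinearMap.rTensor g (D'' d).toLinearMap w) =
      LinearMap.rTensor g (D'' d).toLinearMap (u w) := fun d =>
    (D'' d).apply_rTensor_eq_rTensor_apply u.toLinearEquiv.toLinearMap fun x =>
      LinearMap.rTensor_eq_zero_of_mem_span _ (fun s hs => hs d) (hu x)
  have hlocus : ∀ d y, u (p₁g y) = p₂g y →
      u (p₁g (LinearMap.rTensor g (D' d).toLinearMap y)) =
        p₂g (LinearMap.rTensor g (D' d).toLinearMap y) := fun d y hy => by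
    rw [LinearMap.apply_rTensor_eq_rTensor_apply_of_tmul p₁g _ hp₁ (hD''₁ d), hcomm, hy,
      LinearMap.apply_rTensor_eq_rTensor_apply_of_tmul p₂g _ hp₂ (hD''₂ d)]
  let ιL : Lu →ₗ⁅k⁆ R' ⊗[k] g := { ι with map_lie' := hι_lie _ _ }
  let Φ := (Derivation.baseChangeLieHom g).comp (Derivation.extensionLieHom D' hD')
  have hΦ : ∀ d x, ∃ y, ιL y = Φ d (ιL x) := fun d x =>
    (hι_range _).mpr (hlocus d _ ((hι_range _).mp ⟨x, rfl⟩))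
  let ρ := LieDerivation.restrictLieHom ιL hι_inj Φ hΦ
  have hρ : ∀ d x, ι (ρ d x) = LinearMap.rTensor g (D' d).toLinearMap (ι x) :=
    LieDerivation.apply_restrictLieHom ιL hι_inj Φ hΦ
  have hleib : ∀ (d : Derivation k R R) (r : R) (x : Lu), ρ d (r • x) = d r • x + r • ρ d x :=
    fun d r x => hι_inj <| by
      rw [hρ, hι_smul, Derivation.rTensor_smul, hD', map_add, hι_smul, hι_smul, hρ]
  have hL : CentroidIsScalars k R Lu := hcent
  exact ⟨ρ, hρ, hL.injective_of_leibniz hleib, hleib, hL.existsUnique_add_of_leibniz hleib,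
    hL.lie_apply_smul⟩
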